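/- Let P_s be a sign pattern on n nodes, let A ∈ Q_s(P_s), let λ > 0 be a real number, and let ν ∈ ℝ^n satisfy ν^T A = λ ν^T. Let Z ⊆ V be such that ν_i = 0 for all i ∈ Z. Suppose a configuration with black set C and marking m is reachable from the configuration with black set Z and no marks by finitely many steps of the signing and coloring rule played on the negative looped pattern P_s^−. Then ν_i = 0 for all i ∈ C, and there exists ε ∈ {+1,−1} such that every marked node k with ν_k ≠ 0 satisfies m(k) = sign(ε·ν_k). -/

import Mathlib

/-- An entry of a sign pattern: `+`, `-`, `0`, or `?` (unrestricted). -/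
inductive SignPatEntry : Type
  | pos | neg | zero | unk
deriving DecidableEq

namespace SignPatEntry

/-- Sign inversion: `inv(+) = -`, `inv(-) = +`. -/
def inv : SignPatEntry → SignPatEntry
  | pos => neg
  | neg => pos
  | zero => zero
  | unk => unk

/-- Product of signs (used as `s · P(u,v)`). -/
def mul : SignPatEntry → SignPatEntry → SignPatEntry
  | pos, y => y
  | neg, y => y.inv
  | zero, _ => zero
  | unk, _ => unk

end SignPatEntry

/-- A real number matches a sign-pattern entry. -/
def matchesSign : SignPatEntry → ℝ → Prop
  | .pos, a => 0 < a
  | .neg, a => a < 0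
  | .zero, a => a = 0
  | .unk, _ => True

/-- The qualitative class of a sign pattern: real matrices whose entries have
the prescribed signs. -/
def QClass {n : ℕ} (P : Fin n → Fin n → SignPatEntry)
    (A : Matrix (Fin n) (Fin n) ℝ) : Prop :=
  ∀ i j : Fin n, matchesSign (P i j) (A i j)

/-- A configuration of the signing-and-coloring game: a set of black nodes and a
partial marking of nodes with signs. -/
structure Config (n : ℕ) where
  black : Finset (Fin n)
  mark : Fin n → Option SignPatEntry

/-- The set of white out-neighbors of `v` (out-neighbors of `v` are the `u` with
`P u v ≠ 0`). -/
def Wset {n : ℕ} (P : Fin n → Fin n → SignPatEntry) (c : Config n) (v : Fin n) :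
    Finset (Fin n) :=
  Finset.univ.filter (fun u => u ∉ c.black ∧ P u v ≠ SignPatEntry.zero)

/-- One step of the signing and coloring rule, played on the pattern `P`. -/
inductive Step {n : ℕ} (P : Fin n → Fin n → SignPatEntry) : Config n → Config n → Prop
  /-- (1) a pivot node `v` with a single white out-neighbor `u` forces `u` black. -/
  | force1 (c : Config n) (v u : Fin n)
      (hv : v ∈ c.black ∨ P v v ≠ SignPatEntry.unk)
      (hW : Wset P c v = {u}) :
      Step P c ⟨insert u c.black, c.mark⟩
  /-- (2) if all white out-neighbors of a pivot `v` are marked consistently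
  (all with `m(u) = P(u,v)` or all with `m(u) = -P(u,v)`), they all become black. -/
  | force2 (c : Config n) (v : Fin n)
      (hv : v ∈ c.black ∨ P v v ≠ SignPatEntry.unk)
      (hall : (∀ u ∈ Wset P c v, c.mark u = some (P u v)) ∨
              (∀ u ∈ Wset P c v, c.mark u = some (P u v).inv)) :
      Step P c ⟨c.black ∪ Wset P c v, c.mark⟩
  /-- (3) if exactly one white out-neighbor `w` of a pivot `v` is unmarked, at least one
  is marked, and every marked one satisfies `m(u) = s · P(u,v)`, then `w` gets
  marked with `-s · P(w,v)`. -/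
  | force3 (c : Config n) (v w : Fin n) (s : SignPatEntry)
      (hv : v ∈ c.black ∨ P v v ≠ SignPatEntry.unk)
      (hs : s = SignPatEntry.pos ∨ s = SignPatEntry.neg)
      (hw : w ∈ Wset P c v) (hwnone : c.mark w = none)
      (hmarked : ∀ u ∈ Wset P c v, u ≠ w → c.mark u = some (s.mul (P u v)))
      (hex : ∃ u ∈ Wset P c v, u ≠ w) :
      Step P c ⟨c.black, Function.update c.mark w (some (s.inv.mul (P w v)))⟩
  /-- (4) if no white node is marked, an arbitrary white node may be marked `+`. -/
  | force4 (c : Config n) (u : Fin n)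
      (hnomark : ∀ x : Fin n, x ∉ c.black → c.mark x = none)
      (hu : u ∉ c.black) :
      Step P c ⟨c.black, Function.update c.mark u (some SignPatEntry.pos)⟩

/-- The initial configuration: black set `Z`, no marks. -/
def initConfig {n : ℕ} (Z : Finset (Fin n)) : Config n := ⟨Z, fun _ => none⟩

/-- `Z` is a signed zero forcing set of the pattern `P`. -/
def SignedZFS {n : ℕ} (P : Fin n → Fin n → SignPatEntry) (Z : Finset (Fin n)) : Prop :=
  ∃ c : Config n, Relation.ReflTransGen (Step P) (initConfig Z) c ∧ c.black = Finset.univ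

/-- The negative looped pattern `P⁻`: off-diagonal as `P`; diagonal `-` if
`P i i ∈ {0,-}`, and `?` if `P i i ∈ {+,?}`. -/
def negLooped {n : ℕ} (P : Fin n → Fin n → SignPatEntry) :
    Fin n → Fin n → SignPatEntry := fun i j =>
  if i = j then
    (match P i i with
      | SignPatEntry.zero => SignPatEntry.neg
      | SignPatEntry.neg => SignPatEntry.neg
      | _ => SignPatEntry.unk)
  else P i j

/-- The positive looped pattern `P⁺`: off-diagonal as `P`; diagonal `+` if
`P i i ∈ {0,+}`, and `?` if `P i i ∈ {-,?}`. -/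
def posLooped {n : ℕ} (P : Fin n → Fin n → SignPatEntry) :
    Fin n → Fin n → SignPatEntry := fun i j =>
  if i = j then
    (match P i i with
      | SignPatEntry.zero => SignPatEntry.pos
      | SignPatEntry.pos => SignPatEntry.pos
      | _ => SignPatEntry.unk)
  else P i j

/-- The sign of a real number, as a sign-pattern entry. -/
noncomputable def sgnR (x : ℝ) : SignPatEntry :=
  if 0 < x then SignPatEntry.pos else if x < 0 then SignPatEntry.neg else SignPatEntry.zero

/-!
Put `M = A - λ I`, so that `νᵀ M = 0` and `M` lies in the qualitative class of `P⁻`. For a pivot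
`v`, the column identity `∑ u, ν u * M u v = 0` reduces to the white out-neighbours of `v` once `ν`
vanishes on the black nodes, and each summand has sign `sign (ν u) · P⁻(u,v)`. The invariant kept
along the game is that `ν` vanishes on black nodes and that, for a global sign `ε`, every mark
records `ε · sign ν`. Rule (1) then forces the one remaining summand to vanish, rule (2) makes all
summands share one sign so that they all vanish, and rule (3) gives the unmarked summand the sign
opposite to the others, which is exactly the mark it receives.
-/

open SignType (sign)

lemma SignType.mul_self_of_ne_zero {a : SignType} (h : a ≠ 0) : a * a = 1 :=
  mul_inv_cancel₀ h

lemma SignType.ne_neg_of_ne_zero {a : SignType} (h : a ≠ 0) : a ≠ -a := by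
  cases a <;> simp_all

lemma sign_eq_neg_of_sum_eq_zero {ι : Type*} {s : Finset ι} {f : ι → ℝ} {w : ι} {ε : SignType}
    (hsum : ∑ i ∈ s, f i = 0) (hw : w ∈ s) (hf : ∀ i ∈ s, i ≠ w → f i ≠ 0 → sign (f i) = ε)
    (hw0 : f w ≠ 0) : sign (f w) = -ε := by
  classical
  set t := (s.erase w).filter (f · ≠ 0)
  have hfw : f w = -∑ i ∈ t, f i := by
    rw [Finset.sum_filter_ne_zero, eq_neg_iff_add_eq_zero, Finset.add_sum_erase s f hw, hsum]
  rcases t.eq_empty_or_nonempty with ht | ht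
  · exact absurd (by simpa [ht] using hfw) hw0
  · rw [hfw, Left.sign_neg, sign_sum ht ε]
    intro i hi
    obtain ⟨hi, hfi⟩ := Finset.mem_filter.mp hi
    exact hf i (Finset.mem_of_mem_erase hi) (Finset.ne_of_mem_erase hi) hfi

namespace SignPatEntry

def toSign : SignPatEntry → SignType
  | pos => 1
  | neg => -1
  | zero => 0
  | unk => 0

@[simp] lemma toSign_inv (σ : SignPatEntry) : σ.inv.toSign = -σ.toSign := by
  cases σ <;> rfl

@[simp] lemma toSign_mul (s σ : SignPatEntry) : (s.mul σ).toSign = s.toSign * σ.toSign := by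
  cases s <;> cases σ <;> rfl

lemma toSign_ne_zero {σ : SignPatEntry} (h0 : σ ≠ zero) (hu : σ ≠ unk) : σ.toSign ≠ 0 := by
  cases σ <;> simp_all [toSign]

end SignPatEntry

open SignPatEntry

lemma matchesSign_iff_toSign_eq {σ : SignPatEntry} (hσ : σ ≠ unk) {x : ℝ} :
    matchesSign σ x ↔ σ.toSign = sign x := by
  cases σ <;> simp_all [matchesSign, toSign, eq_comm (b := sign x), sign_eq_one_iff,
    sign_eq_neg_one_iff, sign_eq_zero_iff]

lemma eq_sgnR_iff_toSign_eq {σ : SignPatEntry} {x : ℝ} (hx : x ≠ 0) :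
    σ = sgnR x ↔ σ.toSign = sign x := by
  rcases hx.lt_or_gt with hx | hx
  · rw [sgnR, if_neg hx.not_gt, if_pos hx, sign_neg hx]
    cases σ <;> simp [toSign]
  · rw [sgnR, if_pos hx, sign_pos hx]
    cases σ <;> simp [toSign]

lemma negLooped_of_ne {n : ℕ} (P : Fin n → Fin n → SignPatEntry) {i j : Fin n} (h : i ≠ j) :
    negLooped P i j = P i j :=
  if_neg h

lemma qClass_negLooped_sub_smul_one {n : ℕ} {P : Fin n → Fin n → SignPatEntry}
    {A : Matrix (Fin n) (Fin n) ℝ} (hA : QClass P A) {lam : ℝ} (hlam : 0 < lam) :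
    QClass (negLooped P) (A - lam • 1) := by
  intro i j
  rcases eq_or_ne i j with rfl | hij
  · have hAi := hA i i
    simp only [negLooped, if_true, Matrix.sub_apply, Matrix.smul_apply, Matrix.one_apply_eq,
      smul_eq_mul, mul_one]
    cases h : P i i <;> simp only [h, matchesSign] at hAi ⊢ <;> linarith
  · simpa [negLooped_of_ne P hij, Matrix.one_apply_ne hij] using hA i j

namespace Config

variable {n : ℕ}

def Agrees (c : Config n) (ν : Fin n → ℝ) (ε : SignType) : Prop :=
  (∀ i ∈ c.black, ν i = 0) ∧
    ∀ k σ, c.mark k = some σ → ν k ≠ 0 → σ.toSign = ε * sign (ν k)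

end Config

section Game

variable {n : ℕ} {Q : Fin n → Fin n → SignPatEntry} {M : Matrix (Fin n) (Fin n) ℝ}
  {ν : Fin n → ℝ} {c : Config n} {v u : Fin n} {ε : SignType}

lemma sum_wset_eq_zero (hM : QClass Q M) (hν : Matrix.vecMul ν M = 0)
    (hc : ∀ i ∈ c.black, ν i = 0) (v : Fin n) :
    ∑ u ∈ Wset Q c v, ν u * M u v = 0 := by
  rw [Wset, Finset.sum_filter_of_ne]
  · simpa [Matrix.vecMul, dotProduct] using congrFun hν v
  · intro u _ hu
    refine ⟨fun hb => hu (by rw [hc u hb, zero_mul]), fun hz => hu ?_⟩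
    have hMuv := hM u v
    rw [hz, matchesSign] at hMuv
    rw [hMuv, mul_zero]

lemma toSign_eq_sign_of_mem_wset (hQ : ∀ i j, i ≠ j → Q i j ≠ unk) (hM : QClass Q M)
    (hv : v ∈ c.black ∨ Q v v ≠ unk) (hu : u ∈ Wset Q c v) :
    (Q u v).toSign = sign (M u v) ∧ (Q u v).toSign ≠ 0 := by
  obtain ⟨-, hub, hu0⟩ := Finset.mem_filter.mp hu
  have hunk : Q u v ≠ unk := by
    rcases eq_or_ne u v with rfl | huv
    · exact hv.resolve_left hub
    · exact hQ u v huv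
  exact ⟨(matchesSign_iff_toSign_eq hunk).mp (hM u v), toSign_ne_zero hu0 hunk⟩

lemma ne_zero_of_mem_wset (hQ : ∀ i j, i ≠ j → Q i j ≠ unk) (hM : QClass Q M)
    (hv : v ∈ c.black ∨ Q v v ≠ unk) (hu : u ∈ Wset Q c v) : M u v ≠ 0 := by
  obtain ⟨hsign, hne⟩ := toSign_eq_sign_of_mem_wset hQ hM hv hu
  rwa [hsign, sign_ne_zero] at hne

lemma sign_mul_of_mem_wset (hQ : ∀ i j, i ≠ j → Q i j ≠ unk) (hM : QClass Q M) (hε : ε ≠ 0)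
    (hc : c.Agrees ν ε) (hv : v ∈ c.black ∨ Q v v ≠ unk) (hu : u ∈ Wset Q c v)
    {σ : SignPatEntry} (hσ : c.mark u = some σ) (hνu : ν u ≠ 0) :
    sign (ν u * M u v) = ε * σ.toSign * (Q u v).toSign := by
  rw [sign_mul, (toSign_eq_sign_of_mem_wset hQ hM hv hu).1, hc.2 u σ hσ hνu, ← mul_assoc,
    SignType.mul_self_of_ne_zero hε, one_mul]

lemma Config.Agrees.force1 (hQ : ∀ i j, i ≠ j → Q i j ≠ unk) (hM : QClass Q M)
    (hν : Matrix.vecMul ν M = 0) (hc : c.Agrees ν ε) (hv : v ∈ c.black ∨ Q v v ≠ unk)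
    (hW : Wset Q c v = {u}) : (⟨insert u c.black, c.mark⟩ : Config n).Agrees ν ε := by
  refine ⟨fun i hi => ?_, hc.2⟩
  obtain rfl | hi := Finset.mem_insert.mp hi
  · have hsum := sum_wset_eq_zero hM hν hc.1 v
    rw [hW, Finset.sum_singleton] at hsum
    exact (mul_eq_zero.mp hsum).resolve_right
      (ne_zero_of_mem_wset hQ hM hv (hW ▸ Finset.mem_singleton_self i))
  · exact hc.1 i hi

lemma Config.Agrees.force2 (hQ : ∀ i j, i ≠ j → Q i j ≠ unk) (hM : QClass Q M)
    (hν : Matrix.vecMul ν M = 0) (hε : ε ≠ 0) (hc : c.Agrees ν ε)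
    (hv : v ∈ c.black ∨ Q v v ≠ unk)
    (hall : (∀ u ∈ Wset Q c v, c.mark u = some (Q u v)) ∨
      (∀ u ∈ Wset Q c v, c.mark u = some (Q u v).inv)) :
    (⟨c.black ∪ Wset Q c v, c.mark⟩ : Config n).Agrees ν ε := by
  obtain ⟨δ, hδ, hsign⟩ : ∃ δ : SignType, δ ≠ 0 ∧
      ∀ u ∈ Wset Q c v, ν u ≠ 0 → sign (ν u * M u v) = ε * δ := by
    rcases hall with hall | hall
    · refine ⟨1, one_ne_zero, fun u hu hνu => ?_⟩
      rw [sign_mul_of_mem_wset hQ hM hε hc hv hu (hall u hu) hνu, mul_assoc,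
        SignType.mul_self_of_ne_zero (toSign_eq_sign_of_mem_wset hQ hM hv hu).2]
    · refine ⟨-1, by decide, fun u hu hνu => ?_⟩
      rw [sign_mul_of_mem_wset hQ hM hε hc hv hu (hall u hu) hνu, toSign_inv, mul_assoc,
        neg_mul, SignType.mul_self_of_ne_zero (toSign_eq_sign_of_mem_wset hQ hM hv hu).2]
  refine ⟨fun i hi => ?_, hc.2⟩
  obtain hi | hi := Finset.mem_union.mp hi
  · exact hc.1 i hi
  · by_contra hνi
    -- a nonzero summand would have sign both `ε * δ` and `-(ε * δ)`
    have hopp := sign_eq_neg_of_sum_eq_zero (sum_wset_eq_zero hM hν hc.1 v) hi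
      (fun u hu _ h => hsign u hu (left_ne_zero_of_mul h))
      (mul_ne_zero hνi (ne_zero_of_mem_wset hQ hM hv hi))
    rw [hsign i hi hνi] at hopp
    exact SignType.ne_neg_of_ne_zero (mul_ne_zero hε hδ) hopp

lemma Config.Agrees.force3 (hQ : ∀ i j, i ≠ j → Q i j ≠ unk) (hM : QClass Q M)
    (hν : Matrix.vecMul ν M = 0) (hε : ε ≠ 0) (hc : c.Agrees ν ε)
    (hv : v ∈ c.black ∨ Q v v ≠ unk) {w : Fin n} {s : SignPatEntry} (hw : w ∈ Wset Q c v)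
    (hmarked : ∀ u ∈ Wset Q c v, u ≠ w → c.mark u = some (s.mul (Q u v))) :
    (⟨c.black, Function.update c.mark w (some (s.inv.mul (Q w v)))⟩ : Config n).Agrees ν ε := by
  refine ⟨hc.1, fun k σ hk hνk => ?_⟩
  rcases eq_or_ne k w with rfl | hkw
  · obtain rfl : s.inv.mul (Q k v) = σ := by simpa using hk
    obtain ⟨hQk, hq⟩ := toSign_eq_sign_of_mem_wset hQ hM hv hw
    have hsign : sign (ν k) * (Q k v).toSign = -(ε * s.toSign) := by
      rw [hQk, ← sign_mul]
      refine sign_eq_neg_of_sum_eq_zero (f := fun u => ν u * M u v)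
        (sum_wset_eq_zero hM hν hc.1 v) hw
        (fun u hu huk h => ?_) (mul_ne_zero hνk (ne_zero_of_mem_wset hQ hM hv hw))
      rw [sign_mul_of_mem_wset hQ hM hε hc hv hu (hmarked u hu huk) (left_ne_zero_of_mul h),
        toSign_mul, mul_assoc, mul_assoc,
        SignType.mul_self_of_ne_zero (toSign_eq_sign_of_mem_wset hQ hM hv hu).2, mul_one]
    calc (s.inv.mul (Q k v)).toSign = ε * -(ε * s.toSign) * (Q k v).toSign := by
          rw [toSign_mul, toSign_inv, mul_neg, ← mul_assoc, SignType.mul_self_of_ne_zero hε,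
            one_mul, neg_mul]
      _ = ε * sign (ν k) := by
          rw [← hsign, mul_assoc, mul_assoc, SignType.mul_self_of_ne_zero hq, mul_one]
  · simp only [Function.update_of_ne hkw] at hk
    exact hc.2 k σ hk hνk

lemma Config.Agrees.force4 (hb : ∀ i ∈ c.black, ν i = 0)
    (hnomark : ∀ x, x ∉ c.black → c.mark x = none) (u : Fin n) :
    ∃ ε' ≠ 0, (⟨c.black, Function.update c.mark u (some pos)⟩ : Config n).Agrees ν ε' := by
  refine ⟨if ν u = 0 then 1 else sign (ν u), ?_, hb, fun k σ hk hνk => ?_⟩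
  · split_ifs with h
    · exact one_ne_zero
    · exact sign_ne_zero.mpr h
  rcases eq_or_ne k u with rfl | hku
  · obtain rfl : pos = σ := by simpa using hk
    rw [if_neg hνk, SignType.mul_self_of_ne_zero (sign_ne_zero.mpr hνk)]
    rfl
  · simp only [Function.update_of_ne hku, hnomark k fun hkb => hνk (hb k hkb)] at hk
    cases hk

lemma Step.exists_agrees (hQ : ∀ i j, i ≠ j → Q i j ≠ unk) (hM : QClass Q M)
    (hν : Matrix.vecMul ν M = 0) {c' : Config n} (hstep : Step Q c c')
    (hc : ∃ ε ≠ 0, c.Agrees ν ε) : ∃ ε ≠ 0, c'.Agrees ν ε := by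
  obtain ⟨ε, hε, hc⟩ := hc
  cases hstep with
  | force1 v u hv hW => exact ⟨ε, hε, hc.force1 hQ hM hν hv hW⟩
  | force2 v hv hall => exact ⟨ε, hε, hc.force2 hQ hM hν hε hv hall⟩
  | force3 v w s hv _ hw _ hmarked _ => exact ⟨ε, hε, hc.force3 hQ hM hν hε hv hw hmarked⟩
  | force4 u hnomark _ => exact Config.Agrees.force4 hc.1 hnomark u

lemma exists_agrees_of_reflTransGen (hQ : ∀ i j, i ≠ j → Q i j ≠ unk) (hM : QClass Q M)
    (hν : Matrix.vecMul ν M = 0) {Z : Finset (Fin n)} (hZ : ∀ i ∈ Z, ν i = 0)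
    (hreach : Relation.ReflTransGen (Step Q) (initConfig Z) c) : ∃ ε ≠ 0, c.Agrees ν ε := by
  induction hreach with
  | refl => exact ⟨1, one_ne_zero, hZ, fun _ _ hk => by cases hk⟩
  | tail _ hstep ih => exact hstep.exists_agrees hQ hM hν ih

end Game

/-- If `ν` is a left eigenvector of `A ∈ Q_s(P_s)` for `λ > 0` vanishing
on `Z`, and a configuration `(C, m)` is reachable from `(Z, no marks)` by the signing
and coloring rule on the negative looped pattern `P_s⁻`, then `ν` vanishes on `C` and,
for some `ε ∈ {+1, -1}`, every marked node `k` with `ν k ≠ 0` has mark `sign(ε · ν k)`. -/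
theorem stmt0 {n : ℕ} (P : Fin n → Fin n → SignPatEntry)
    (hP : ∀ i j : Fin n, i ≠ j → P i j ≠ SignPatEntry.unk)
    (A : Matrix (Fin n) (Fin n) ℝ) (hA : QClass P A)
    (lam : ℝ) (hlam : 0 < lam)
    (ν : Fin n → ℝ) (hν : Matrix.vecMul ν A = lam • ν)
    (Z : Finset (Fin n)) (hZ : ∀ i ∈ Z, ν i = 0)
    (c : Config n)
    (hreach : Relation.ReflTransGen (Step (negLooped P)) (initConfig Z) c) :
    (∀ i ∈ c.black, ν i = 0) ∧
    ∃ ε : ℝ, (ε = 1 ∨ ε = -1) ∧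
      ∀ (k : Fin n) (σ : SignPatEntry), c.mark k = some σ → ν k ≠ 0 →
        σ = sgnR (ε * ν k) := by
  have hQ : ∀ i j, i ≠ j → negLooped P i j ≠ unk := fun i j hij =>
    negLooped_of_ne P hij ▸ hP i j hij
  have hνM : Matrix.vecMul ν (A - lam • 1) = 0 := by
    rw [Matrix.vecMul_sub, Matrix.vecMul_smul, Matrix.vecMul_one, hν, sub_self]
  obtain ⟨ε, hε, hblack, hmark⟩ :=
    exists_agrees_of_reflTransGen hQ (qClass_negLooped_sub_smul_one hA hlam) hνM hZ hreach
  have hεpm : (ε : ℝ) = 1 ∨ (ε : ℝ) = -1 := by cases ε <;> simp_all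
  refine ⟨hblack, ε, hεpm, fun k σ hk hνk => ?_⟩
  have hsignε : sign (ε : ℝ) = ε := by cases ε <;> simp_all
  rw [eq_sgnR_iff_toSign_eq (mul_ne_zero (by rcases hεpm with h | h <;> simp [h]) hνk),
    sign_mul, hsignε, hmark k σ hk hνk]
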